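/- In the fixed-design GLS setting with compound-symmetry covariance, i.e. Cov(y_i, y_j) = σ_ε² δ_{ij} + ρ for all i, j with σ_ε² > 0 and ρ ≥ 0 (so Σ_{-k} = σ_ε² I_{n−1} + ρ 1_{n−1} 1_{n−1}^t and σ_{-k,k} = ρ 1_{n−1} for every k), under the hypotheses of Theorem 2 and with Cov((y_tr)_j, y_te) = 0 for all j, the CV bias of GLS equals w_cv = (2/n) · (ρ/(σ_ε² + ρ(n−1))) · ∑_{k=1}^n x_k^t (X_{-k}^t Σ_{-k}^{-1} X_{-k})^{-1} X_{-k}^t 1_{n−1}. (The paper's explicit formula for the CV bias of GLS when Cov(y, y) = σ_ε² I + ρ 1 1^t.) -/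

import Mathlib

open MeasureTheory Matrix

/-- Variance `E[(U - E U)^2]` of a real random variable. -/
noncomputable def eVar {Ω : Type*} [MeasurableSpace Ω] (μ : Measure Ω) (U : Ω → ℝ) : ℝ :=
  ∫ ω, (U ω - ∫ ω', U ω' ∂μ) ^ 2 ∂μ

/-- Covariance `E[(U - E U)(V - E V)]` of two real random variables. -/
noncomputable def eCov {Ω : Type*} [MeasurableSpace Ω] (μ : Measure Ω) (U V : Ω → ℝ) : ℝ :=
  ∫ ω, (U ω - ∫ ω', U ω' ∂μ) * (V ω - ∫ ω', V ω' ∂μ) ∂μ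

/-!
Each CV residual is compared with the test error through the decomposition
`E[(U - V)²] = Var U + Var V - 2 Cov(U, V) + (E U - E V)²`. By the moment-matching hypotheses
the variance and mean terms of `y_k - (Hy)_k` and of `y_te - h_te · y_tr` agree, and the test
covariance vanishes, so `w_cv = (2/n) ∑_k Cov(y_k, (Hy)_k)`. Under compound symmetry and
`H_kk = 0` this covariance is `ρ ∑_j H_kj`. Finally `1` is an eigenvector of `Σ_{-k}` with
eigenvalue `σ_ε² + ρ(n-1)`, so `Σ_{-k}⁻¹ 1` is a multiple of `1`, which turns the row sum of `H`
into `x_kᵗ (X_{-k}ᵗ Σ_{-k}⁻¹ X_{-k})⁻¹ X_{-k}ᵗ 1 / (σ_ε² + ρ(n-1))`.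
-/

open ProbabilityTheory

section Moments

variable {Ω : Type*} [MeasurableSpace Ω] {μ : Measure Ω}

lemma eCov_eq_covariance (U V : Ω → ℝ) : eCov μ U V = cov[U, V; μ] := rfl

lemma eVar_eq_variance {U : Ω → ℝ} (hU : AEMeasurable U μ) : eVar μ U = Var[U; μ] :=
  (variance_eq_integral hU).symm

variable [IsProbabilityMeasure μ]

lemma integral_sub_sq_eq {U V : Ω → ℝ} (hU : MemLp U 2 μ) (hV : MemLp V 2 μ) :
    ∫ ω, (U ω - V ω) ^ 2 ∂μ
      = eVar μ U + eVar μ V - 2 * eCov μ U V + (∫ ω, U ω ∂μ - ∫ ω, V ω ∂μ) ^ 2 := by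
  have hvar := variance_eq_sub (hU.sub hV)
  simp only [Pi.pow_apply, Pi.sub_apply] at hvar
  rw [variance_sub hU hV, integral_sub (hU.integrable one_le_two) (hV.integrable one_le_two)]
    at hvar
  rw [eVar_eq_variance hU.aemeasurable, eVar_eq_variance hV.aemeasurable, eCov_eq_covariance]
  linarith

lemma eCov_sum_const_mul {ι : Type*} [Fintype ι] {U : Ω → ℝ} (hU : MemLp U 2 μ)
    (c : ι → ℝ) {f : ι → Ω → ℝ} (hf : ∀ i, MemLp (f i) 2 μ) :
    eCov μ U (fun ω => ∑ i, c i * f i ω) = ∑ i, c i * eCov μ U (f i) := by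
  simp only [eCov_eq_covariance]
  rw [covariance_fun_sum_right (fun i => (hf i).const_mul (c i)) hU]
  simp only [covariance_const_mul_right]

end Moments

section

variable {ι : Type*} [Fintype ι] [DecidableEq ι]

lemma sum_mul_compoundSymm_of_eq_zero {a b : ℝ} {h : ι → ℝ} {k : ι} (hk : h k = 0) :
    ∑ j, h j * ((if k = j then a else 0) + b) = b * ∑ j, h j := by
  simp [mul_add, Finset.sum_add_distrib, Finset.mul_sum, hk, mul_comm]

lemma compoundSymm_mulVec_one {A : Matrix ι ι ℝ} {a b : ℝ}
    (hA : ∀ i j, A i j = (if i = j then a else 0) + b) :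
    A *ᵥ (fun _ => 1) = (a + b * Fintype.card ι) • fun _ => 1 := by
  funext i
  simp [mulVec, dotProduct, hA, Finset.sum_add_distrib, mul_comm]

lemma inv_mulVec_eq_inv_smul {A : Matrix ι ι ℝ} (hA : IsUnit A.det) {s : ℝ} {v : ι → ℝ}
    (hv : A *ᵥ v = s • v) : A⁻¹ *ᵥ v = s⁻¹ • v := by
  have hv' : v = s • (A⁻¹ *ᵥ v) := by
    rw [← mulVec_smul, ← hv, mulVec_mulVec, nonsing_inv_mul _ hA, one_mulVec]
  rcases eq_or_ne s 0 with rfl | hs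
  · rw [zero_smul] at hv'
    rw [hv', mulVec_zero, smul_zero]
  · conv_rhs => rw [hv', smul_smul, inv_mul_cancel₀ hs, one_smul]

lemma vecMul_mul_inv_dotProduct {κ : Type*} [Fintype κ] {A : Matrix ι ι ℝ} (hA : IsUnit A.det)
    {s : ℝ} {w : ι → ℝ} (hw : A *ᵥ w = s • w) (v : κ → ℝ) (B : Matrix κ ι ℝ) :
    vecMul v (B * A⁻¹) ⬝ᵥ w = s⁻¹ * (vecMul v B ⬝ᵥ w) := by
  rw [← vecMul_vecMul, ← dotProduct_mulVec, inv_mulVec_eq_inv_smul hA hw, dotProduct_smul,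
    smul_eq_mul]

end

lemma Fin.sum_eq_sum_comp_of_injective_of_ne {M : Type*} [AddCommMonoid M] {n : ℕ} {k : Fin n}
    {e : Fin (n - 1) → Fin n} (he : Function.Injective e) (hne : ∀ j, e j ≠ k)
    {f : Fin n → M} (hf : f k = 0) : ∑ i, f i = ∑ j, f (e j) := by
  have himage : Finset.univ.image e = Finset.univ.erase k := by
    refine Finset.eq_of_subset_of_card_le (fun i hi => ?_) ?_
    · obtain ⟨j, -, rfl⟩ := Finset.mem_image.mp hi
      exact Finset.mem_erase.mpr ⟨hne j, Finset.mem_univ _⟩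
    · simp [Finset.card_image_of_injective _ he]
  rw [← Finset.add_sum_erase _ _ (Finset.mem_univ k), hf, zero_add, ← himage,
    Finset.sum_image fun i _ j _ h => he h]

theorem cv_bias_gls_compound_symmetry_general
    {Ω : Type*} [MeasurableSpace Ω] (μ : Measure Ω) [IsProbabilityMeasure μ]
    (n p : ℕ) (hn : 0 < n) (σε2 ρ : ℝ)
    (y : Fin n → Ω → ℝ) (hy : ∀ k, MemLp (y k) 2 μ)
    (emb : Fin n → Fin (n - 1) → Fin n)
    (hembinj : ∀ k, Function.Injective (emb k))
    (hembne : ∀ k j, emb k j ≠ k)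
    (x : Fin n → Fin p → ℝ)
    (Xdel : Fin n → Matrix (Fin (n - 1)) (Fin p) ℝ)
    (hcov : ∀ i j, eCov μ (y i) (y j) = (if i = j then σε2 else 0) + ρ)
    (Sigdel : Fin n → Matrix (Fin (n - 1)) (Fin (n - 1)) ℝ)
    (hSigdel : ∀ k i j, Sigdel k i j = eCov μ (y (emb k i)) (y (emb k j)))
    (hSigdelinv : ∀ k, IsUnit (Sigdel k).det)
    (H : Matrix (Fin n) (Fin n) ℝ)
    (hHdiag : ∀ k, H k k = 0)
    (hHrow : ∀ k j, H k (emb k j)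
      = Matrix.vecMul (x k)
          (((Xdel k)ᵀ * (Sigdel k)⁻¹ * Xdel k)⁻¹ * (Xdel k)ᵀ * (Sigdel k)⁻¹) j)
    (ytr : Fin (n - 1) → Ω → ℝ) (hytr : ∀ j, MemLp (ytr j) 2 μ)
    (yte : Ω → ℝ) (hyte : MemLp yte 2 μ)
    (hte : Fin (n - 1) → ℝ)
    (hmean : ∀ k, ∫ ω, y k ω ∂μ = ∫ ω, yte ω ∂μ)
    (hvar : ∀ k, eVar μ (y k) = eVar μ yte)
    (hmeanH : ∀ k, ∫ ω, (∑ j, H k j * y j ω) ∂μ = ∫ ω, (∑ j, hte j * ytr j ω) ∂μ)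
    (hvarH : ∀ k, eVar μ (fun ω => ∑ j, H k j * y j ω)
        = eVar μ (fun ω => ∑ j, hte j * ytr j ω))
    (hc : ∀ j, eCov μ (ytr j) yte = 0) :
    (∫ ω, (yte ω - ∑ j, hte j * ytr j ω) ^ 2 ∂μ)
        - (1 / (n : ℝ)) * ∫ ω, ∑ k, (y k ω - ∑ j, H k j * y j ω) ^ 2 ∂μ
      = (2 / (n : ℝ)) * (ρ / (σε2 + ρ * ((n : ℝ) - 1))) * ∑ k,
          (Matrix.vecMul (x k) (((Xdel k)ᵀ * (Sigdel k)⁻¹ * Xdel k)⁻¹ * (Xdel k)ᵀ))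
            ⬝ᵥ (fun _ => (1 : ℝ)) := by
  have hn' : (n : ℝ) ≠ 0 := Nat.cast_ne_zero.mpr hn.ne'
  set S := fun ω => ∑ j, hte j * ytr j ω
  set T := fun k ω => ∑ j, H k j * y j ω
  set c := fun k => vecMul (x k) (((Xdel k)ᵀ * (Sigdel k)⁻¹ * Xdel k)⁻¹ * (Xdel k)ᵀ)
    ⬝ᵥ (fun _ => (1 : ℝ))
  set s := σε2 + ρ * ((n : ℝ) - 1)
  have hS : MemLp S 2 μ := memLp_finsetSum _ fun j _ => (hytr j).const_mul (hte j)
  have hT k : MemLp (T k) 2 μ := memLp_finsetSum _ fun j _ => (hy j).const_mul (H k j)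
  have hcovS : eCov μ yte S = 0 := by
    rw [eCov_sum_const_mul hyte hte hytr]
    refine Finset.sum_eq_zero fun j _ => ?_
    rw [eCov_eq_covariance, covariance_comm, ← eCov_eq_covariance, hc, mul_zero]
  have hcovT k : eCov μ (y k) (T k) = ρ * ∑ j, H k j := by
    simp only [T, eCov_sum_const_mul (hy k) (H k) hy, hcov]
    exact sum_mul_compoundSymm_of_eq_zero (hHdiag k)
  have hres k : ∫ ω, (y k ω - T k ω) ^ 2 ∂μ
      = ∫ ω, (yte ω - S ω) ^ 2 ∂μ - 2 * (ρ * ∑ j, H k j) := by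
    rw [integral_sub_sq_eq (hy k) (hT k), integral_sub_sq_eq hyte hS, hvar, hvarH, hmean, hmeanH,
      hcovT, hcovS]
    ring
  have hSigdel_one k : Sigdel k *ᵥ (fun _ => 1) = s • fun _ => 1 := by
    rw [compoundSymm_mulVec_one (a := σε2) (b := ρ), Fintype.card_fin, Nat.cast_pred hn]
    intro i j
    simp only [hSigdel, hcov, (hembinj k).eq_iff]
  have hrow k : ∑ j, H k j = s⁻¹ * c k := by
    rw [Fin.sum_eq_sum_comp_of_injective_of_ne (hembinj k) (hembne k) (hHdiag k)]
    dsimp only [c]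
    rw [← vecMul_mul_inv_dotProduct (hSigdelinv k) (hSigdel_one k)]
    simp only [hHrow, dotProduct, mul_one]
  rw [integral_finsetSum (f := fun k ω => (y k ω - T k ω) ^ 2) _
      fun k _ => ((hy k).sub (hT k)).integrable_sq,
    Finset.sum_congr rfl fun k _ => hres k]
  simp only [hrow, Finset.sum_sub_distrib, Finset.sum_const, Finset.card_univ,
    Fintype.card_fin, nsmul_eq_mul, ← Finset.mul_sum]
  field_simp
  ring

/-- **The paper's explicit formula for the CV bias of GLS under a compound-symmetry
covariance** `Cov(y_i, y_j) = σ_ε² δ_{ij} + ρ`: under the hypotheses of Theorem 2 and with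
`Cov(y_tr, y_te) = 0`,
`w_cv = (2/n) (ρ/(σ_ε² + ρ(n−1))) ∑_k x_k^t (X_{-k}^t Σ_{-k}^{-1} X_{-k})^{-1} X_{-k}^t 1_{n−1}`. -/
theorem cv_bias_gls_compound_symmetry
    {Ω : Type*} [MeasurableSpace Ω] (μ : Measure Ω) [IsProbabilityMeasure μ]
    (n p : ℕ) (hn : 0 < n) (σε2 ρ : ℝ) (hσ : 0 < σε2) (hρ : 0 ≤ ρ)
    (y : Fin n → Ω → ℝ) (hy : ∀ k, MemLp (y k) 2 μ)
    (emb : Fin n → Fin (n - 1) → Fin n)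
    (hembinj : ∀ k, Function.Injective (emb k))
    (hembne : ∀ k j, emb k j ≠ k)
    (x : Fin n → Fin p → ℝ)
    (Xdel : Fin n → Matrix (Fin (n - 1)) (Fin p) ℝ)
    (hXdel : ∀ k j, Xdel k j = x (emb k j))
    (hcov : ∀ i j, eCov μ (y i) (y j) = (if i = j then σε2 else 0) + ρ)
    (Sigdel : Fin n → Matrix (Fin (n - 1)) (Fin (n - 1)) ℝ)
    (hSigdel : ∀ k i j, Sigdel k i j = eCov μ (y (emb k i)) (y (emb k j)))
    (hSigdelinv : ∀ k, IsUnit (Sigdel k).det)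
    (hXSX : ∀ k, IsUnit ((Xdel k)ᵀ * (Sigdel k)⁻¹ * Xdel k).det)
    (H : Matrix (Fin n) (Fin n) ℝ)
    (hHdiag : ∀ k, H k k = 0)
    (hHrow : ∀ k j, H k (emb k j)
      = Matrix.vecMul (x k)
          (((Xdel k)ᵀ * (Sigdel k)⁻¹ * Xdel k)⁻¹ * (Xdel k)ᵀ * (Sigdel k)⁻¹) j)
    (ytr : Fin (n - 1) → Ω → ℝ) (hytr : ∀ j, MemLp (ytr j) 2 μ)
    (yte : Ω → ℝ) (hyte : MemLp yte 2 μ)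
    (hte : Fin (n - 1) → ℝ)
    (hmean : ∀ k, ∫ ω, y k ω ∂μ = ∫ ω, yte ω ∂μ)
    (hvar : ∀ k, eVar μ (y k) = eVar μ yte)
    (hmeanH : ∀ k, ∫ ω, (∑ j, H k j * y j ω) ∂μ = ∫ ω, (∑ j, hte j * ytr j ω) ∂μ)
    (hvarH : ∀ k, eVar μ (fun ω => ∑ j, H k j * y j ω)
        = eVar μ (fun ω => ∑ j, hte j * ytr j ω))
    (hc : ∀ j, eCov μ (ytr j) yte = 0) :
    (∫ ω, (yte ω - ∑ j, hte j * ytr j ω) ^ 2 ∂μ)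
        - (1 / (n : ℝ)) * ∫ ω, ∑ k, (y k ω - ∑ j, H k j * y j ω) ^ 2 ∂μ
      = (2 / (n : ℝ)) * (ρ / (σε2 + ρ * ((n : ℝ) - 1))) * ∑ k,
          (Matrix.vecMul (x k) (((Xdel k)ᵀ * (Sigdel k)⁻¹ * Xdel k)⁻¹ * (Xdel k)ᵀ))
            ⬝ᵥ (fun _ => (1 : ℝ)) :=
  cv_bias_gls_compound_symmetry_general μ n p hn σε2 ρ y hy emb hembinj hembne x Xdel hcov Sigdel
    hSigdel hSigdelinv H hHdiag hHrow ytr hytr yte hyte hte hmean hvar hmeanH hvarH hc
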